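/- Let δ be a local congruence on a lattice L and let [x]_δ, [y]_δ, [c]_δ be classes such that there exist x₁, x₂ ∈ [x]_δ, c₁, c₂ ∈ [c]_δ, y₁, y₂ ∈ [y]_δ with x₁ ≤ c₁ ≤ y₁ and y₂ ≤ c₂ ≤ x₂. Then [x]_δ = [c]_δ = [y]_δ. -/

import Mathlib

/-! Two classes containing elements `x₁ ≤ c₁` and `c₂ ≤ x₂` meet: `x₁ ⊔ c₂` lies between `x₁` and
`x₁ ⊔ x₂` and between `c₂` and `c₁ ⊔ c₂`, so by convexity it belongs to both classes. Apply this to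
the pairs `[x], [c]` and `[c], [y]`. -/

variable {L : Type*}

def LocalCong [Lattice L] (δ : L → L → Prop) : Prop :=
  Equivalence δ ∧
  (∀ x a b, δ x a → δ x b → δ x (a ⊔ b) ∧ δ x (a ⊓ b)) ∧
  (∀ x a b c, δ x a → δ x b → a ≤ c → c ≤ b → δ x c)

namespace LocalCong

variable [Lattice L] {δ : L → L → Prop} {x c a b d : L}

theorem rel_sup (h : LocalCong δ) (ha : δ x a) (hb : δ x b) : δ x (a ⊔ b) :=
  (h.2.1 x a b ha hb).1

theorem rel_of_le_of_le (h : LocalCong δ) (ha : δ x a) (hb : δ x b) (had : a ≤ d) (hdb : d ≤ b) :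
    δ x d :=
  h.2.2 x a b d ha hb had hdb

theorem rel_sup_of_le (h : LocalCong δ) (ha : δ x a) (hb : δ x b) (hdb : d ≤ b) :
    δ x (a ⊔ d) :=
  h.rel_of_le_of_le ha (h.rel_sup ha hb) le_sup_left (sup_le_sup_left hdb a)

theorem rel_of_crossing (h : LocalCong δ) {x₁ x₂ c₁ c₂ : L}
    (hx₁ : δ x x₁) (hx₂ : δ x x₂) (hc₁ : δ c c₁) (hc₂ : δ c c₂)
    (h₁ : x₁ ≤ c₁) (h₂ : c₂ ≤ x₂) : δ x c := by
  have hx : δ x (x₁ ⊔ c₂) := h.rel_sup_of_le hx₁ hx₂ h₂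
  have hc : δ c (x₁ ⊔ c₂) := sup_comm c₂ x₁ ▸ h.rel_sup_of_le hc₂ hc₁ h₁
  exact h.1.trans hx (h.1.symm hc)

end LocalCong

theorem stmt15 [Lattice L] (δ : L → L → Prop) (h : LocalCong δ)
    (x c y x₁ x₂ c₁ c₂ y₁ y₂ : L)
    (hx₁ : δ x x₁) (hx₂ : δ x x₂) (hc₁ : δ c c₁) (hc₂ : δ c c₂)
    (hy₁ : δ y y₁) (hy₂ : δ y y₂)
    (h₁ : x₁ ≤ c₁) (h₂ : c₁ ≤ y₁) (h₃ : y₂ ≤ c₂) (h₄ : c₂ ≤ x₂) :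
    δ x c ∧ δ c y ∧ δ x y := by
  have hxc : δ x c := h.rel_of_crossing hx₁ hx₂ hc₁ hc₂ h₁ h₄
  have hcy : δ c y := h.rel_of_crossing hc₁ hc₂ hy₁ hy₂ h₂ h₃
  exact ⟨hxc, hcy, h.1.trans hxc hcy⟩
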